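/- arXiv:2312.01428 — 5 statements merged into one kernel-verified Lean document; each statement's English description precedes it below -/
import Mathlib

section
/- Let X ⊆ ℝ^n be nonempty, f : ℝ^n → ℝ^m, K ⊆ ℝ^m a pointed closed convex cone (K ∩ (−K) = {0}), ε ∈ ℝ^m_+, and x̄ ∈ X. Then cone[f(X) − (f(x̄) − ε)] ∩ (−K) = {0} if and only if cone[f(X) + K − (f(x̄) − ε)] ∩ (−K) = {0}. -/
/-!
If `t • (a + k)` lies in `-K` with `a ∈ A`, `k ∈ K`, then `t • a = t • (a + k) - t • k` lies in
`-K` as well, because the convex cone `K` is closed under addition. So the condition on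
`cone A` forces `t • a = 0`, and then `t • k ∈ K ∩ -K = {0}` by pointedness. The converse is
monotonicity of `cone`, since `A ⊆ A + K`.
-/

open Set Pointwise

/-- The smallest cone containing `D`: `cone D = {t • d : t ≥ 0, d ∈ D}`. -/
def coneGen {E : Type*} [AddCommGroup E] [Module ℝ E] (D : Set E) : Set E :=
  {x | ∃ t : ℝ, 0 ≤ t ∧ ∃ d ∈ D, x = t • d}

section

variable {E : Type*} [AddCommGroup E] [Module ℝ E]

lemma smul_mem_coneGen {D : Set E} {t : ℝ} (ht : 0 ≤ t) {d : E} (hd : d ∈ D) :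
    t • d ∈ coneGen D :=
  ⟨t, ht, d, hd, rfl⟩

lemma coneGen_mono {D D' : Set E} (h : D ⊆ D') : coneGen D ⊆ coneGen D' := by
  rintro _ ⟨t, ht, d, hd, rfl⟩
  exact smul_mem_coneGen ht (h hd)

lemma zero_mem_coneGen_iff {D : Set E} : (0 : E) ∈ coneGen D ↔ D.Nonempty := by
  constructor
  · rintro ⟨_, _, d, hd, _⟩
    exact ⟨d, hd⟩
  · rintro ⟨d, hd⟩
    simpa using smul_mem_coneGen le_rfl hd

lemma add_mem_of_convex_of_smul_mem {K : Set E}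
    (hKcone : ∀ t : ℝ, 0 ≤ t → ∀ v ∈ K, t • v ∈ K) (hKconvex : Convex ℝ K)
    {a b : E} (ha : a ∈ K) (hb : b ∈ K) : a + b ∈ K := by
  have hmid : (1 / 2 : ℝ) • a + (1 / 2 : ℝ) • b ∈ K :=
    hKconvex ha hb (by norm_num) (by norm_num) (by norm_num)
  have h2 : (2 : ℝ) • ((1 / 2 : ℝ) • a + (1 / 2 : ℝ) • b) = a + b := by
    rw [smul_add, smul_smul, smul_smul]
    norm_num
  simpa only [h2] using hKcone 2 (by norm_num) _ hmid

lemma coneGen_add_inter_neg_subset_zero {A K : Set E}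
    (hKcone : ∀ t : ℝ, 0 ≤ t → ∀ v ∈ K, t • v ∈ K) (hKconvex : Convex ℝ K)
    (hKpointed : K ∩ (-K) = {0}) (hA : coneGen A ∩ (-K) ⊆ {0}) :
    coneGen (A + K) ∩ (-K) ⊆ {0} := by
  rintro _ ⟨⟨t, ht, _, ⟨a, ha, k, hk, rfl⟩, rfl⟩, hy⟩
  have htk : t • k ∈ K := hKcone t ht k hk
  have hta : t • a ∈ -K := by
    rw [mem_neg] at hy ⊢
    have := add_mem_of_convex_of_smul_mem hKcone hKconvex hy htk
    rwa [smul_add, neg_add, neg_add_cancel_right] at this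
  have hta0 : t • a = 0 := hA ⟨smul_mem_coneGen ht ha, hta⟩
  rw [smul_add, hta0, zero_add] at hy ⊢
  exact hKpointed ▸ ⟨htk, hy⟩

theorem coneGen_inter_neg_eq_zero_iff_add {A K : Set E}
    (hKcone : ∀ t : ℝ, 0 ≤ t → ∀ v ∈ K, t • v ∈ K) (hKconvex : Convex ℝ K)
    (hKpointed : K ∩ (-K) = {0}) :
    coneGen A ∩ (-K) = {0} ↔ coneGen (A + K) ∩ (-K) = {0} := by
  simp only [Subset.antisymm_iff, singleton_subset_iff, mem_inter_iff, zero_mem_coneGen_iff,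
    mem_neg, neg_zero]
  constructor
  · rintro ⟨hsub, hA, h0⟩
    exact ⟨coneGen_add_inter_neg_subset_zero hKcone hKconvex hKpointed hsub, hA.add ⟨0, h0⟩, h0⟩
  · rintro ⟨hsub, hAK, h0⟩
    have hAsub : A ⊆ A + K := subset_add_left A h0
    exact ⟨(inter_subset_inter_left _ (coneGen_mono hAsub)).trans hsub, hAK.of_add_left, h0⟩

end

theorem stmt_2_general {n m : ℕ} (X : Set (Fin n → ℝ))
    (f : (Fin n → ℝ) → (Fin m → ℝ))
    (K : Set (Fin m → ℝ))
    (hKcone : ∀ t : ℝ, 0 ≤ t → ∀ v ∈ K, t • v ∈ K)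
    (hKconvex : Convex ℝ K)
    (hKpointed : K ∩ (-K) = {0})
    (ε : Fin m → ℝ)
    (xbar : Fin n → ℝ) :
    coneGen ((fun x => f x - (f xbar - ε)) '' X) ∩ (-K) = {0} ↔
      coneGen (((fun x => f x - (f xbar - ε)) '' X) + K) ∩ (-K) = {0} :=
  coneGen_inter_neg_eq_zero_iff_add hKcone hKconvex hKpointed

/-- Let `X ⊆ ℝ^n` be nonempty, `f : ℝ^n → ℝ^m`, `K ⊆ ℝ^m` a pointed closed convex cone,
`ε ∈ ℝ^m_+`, and `xbar ∈ X`. Then `cone [f(X) - (f(xbar) - ε)] ∩ (-K) = {0}` iff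
`cone [f(X) + K - (f(xbar) - ε)] ∩ (-K) = {0}`. -/
theorem stmt_2 {n m : ℕ} (X : Set (Fin n → ℝ)) (hX : X.Nonempty)
    (f : (Fin n → ℝ) → (Fin m → ℝ))
    (K : Set (Fin m → ℝ)) (hKne : K.Nonempty)
    (hKcone : ∀ t : ℝ, 0 ≤ t → ∀ v ∈ K, t • v ∈ K)
    (hKclosed : IsClosed K)
    (hKconvex : Convex ℝ K)
    (hKpointed : K ∩ (-K) = {0})
    (ε : Fin m → ℝ) (hε : ∀ i, 0 ≤ ε i)
    (xbar : Fin n → ℝ) (hxbar : xbar ∈ X) :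
    coneGen ((fun x => f x - (f xbar - ε)) '' X) ∩ (-K) = {0} ↔
      coneGen (((fun x => f x - (f xbar - ε)) '' X) + K) ∩ (-K) = {0} :=
  stmt_2_general X f K hKcone hKconvex hKpointed ε xbar
end

section
/- (Necessary condition for ε-proper efficiency.) Let X ⊆ ℝ^n be nonempty, f : ℝ^n → ℝ^m with components f_1,…,f_m, K = ℝ^m_+, and ε ∈ ℝ^m_+. If x̄ ∈ X is an ε-properly efficient solution, then cl cone[f(X) + ℝ^m_+ − (f(x̄) − ε)] ∩ (−ℝ^m_+) = {0}. -/
open Set Pointwise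

/-- The nonnegative orthant `ℝ^m_+`. -/
def orthant (m : ℕ) : Set (Fin m → ℝ) := {x | ∀ i, 0 ≤ x i}

/-- `xbar` is an ε-efficient solution of the problem `min_K f(x) s.t. x ∈ X`, with the
ordering cone `K = ℝ^m_+`: `xbar ∈ X` and there is no `y ∈ X` with
`f(y) ≤ f(xbar) - ε` and `f(y) ≠ f(xbar) - ε`. -/
def IsEpsEff {n m : ℕ} (X : Set (Fin n → ℝ)) (f : (Fin n → ℝ) → (Fin m → ℝ))
    (ε : Fin m → ℝ) (xbar : Fin n → ℝ) : Prop :=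
  xbar ∈ X ∧ ¬ ∃ y ∈ X, f xbar - ε - f y ∈ orthant m ∧ f y ≠ f xbar - ε

/-- `xbar` is an ε-properly efficient solution (in the sense of Li and Wang / Liu, a
Geoffrion-type notion) of the problem `min f(x) s.t. x ∈ X` with ordering cone `ℝ^m_+`. -/
def IsEpsProperEff {n m : ℕ} (X : Set (Fin n → ℝ)) (f : (Fin n → ℝ) → (Fin m → ℝ))
    (ε : Fin m → ℝ) (xbar : Fin n → ℝ) : Prop :=
  IsEpsEff X f ε xbar ∧ ∃ M : ℝ, 0 < M ∧ ∀ i : Fin m, ∀ x ∈ X,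
    f x i < f xbar i - ε i → ∃ j : Fin m, f xbar j - ε j < f x j ∧
      (f xbar i - f x i - ε i) / (f x j - f xbar j + ε j) ≤ M

/- Proper efficiency with trade-off bound `M` puts every shifted image point `d = f x - (f xbar - ε)`
into the closed set `{d | ∀ i, -d i ≤ M * ∑ j, max (d j) 0}`: a negative coordinate of `d` is
paid for by a positive one at most `M` times smaller. This set is a cone, is stable under adding
`ℝ^m_+`, and is closed, so it contains `cl cone [f(X) + ℝ^m_+ - (f(xbar) - ε)]`; and its only
point in `-ℝ^m_+` is `0`, since there the right-hand side vanishes. -/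

def tradeoffCone (ι : Type*) [Fintype ι] (M : ℝ) : Set (ι → ℝ) :=
  {d | ∀ i, -d i ≤ M * ∑ j, max (d j) 0}

theorem coneGen_subset_of_smul_mem {E : Type*} [AddCommGroup E] [Module ℝ E] {D C : Set E}
    (hDC : D ⊆ C) (hC : ∀ t : ℝ, 0 ≤ t → ∀ x ∈ C, t • x ∈ C) : coneGen D ⊆ C := by
  rintro _ ⟨t, ht, d, hd, rfl⟩
  exact hC t ht d (hDC hd)

theorem zero_mem_coneGen {E : Type*} [AddCommGroup E] [Module ℝ E] {D : Set E}
    (hD : D.Nonempty) : (0 : E) ∈ coneGen D :=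
  ⟨0, le_rfl, hD.some, hD.some_mem, (zero_smul ℝ _).symm⟩

namespace tradeoffCone

variable {ι : Type*} [Fintype ι] {M : ℝ}

theorem isClosed : IsClosed (tradeoffCone ι M) := by
  simp only [tradeoffCone, ofPred_forall]
  refine isClosed_iInter fun i => isClosed_le (continuous_apply i).neg ?_
  exact continuous_const.mul <| continuous_finsetSum _ fun j _ =>
    (continuous_apply j).max continuous_const

theorem smul_mem {t : ℝ} (ht : 0 ≤ t) {d : ι → ℝ} (hd : d ∈ tradeoffCone ι M) :
    t • d ∈ tradeoffCone ι M := by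
  intro i
  have hpos : ∑ j, max ((t • d) j) 0 = t * ∑ j, max (d j) 0 := by
    simp only [Pi.smul_apply, smul_eq_mul, Finset.mul_sum, mul_max_of_nonneg _ _ ht, mul_zero]
  rw [hpos, Pi.smul_apply, smul_eq_mul]
  nlinarith [hd i]

theorem add_orthant_subset {m : ℕ} (hM : 0 ≤ M) :
    tradeoffCone (Fin m) M + orthant m ⊆ tradeoffCone (Fin m) M := by
  rintro _ ⟨d, hd, c, hc, rfl⟩ i
  have hmono : ∑ j, max (d j) 0 ≤ ∑ j, max ((d + c) j) 0 :=
    Finset.sum_le_sum fun j _ => max_le_max (by simp [hc j]) le_rfl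
  have hdi := hd i
  have hci := hc i
  simp only [Pi.add_apply] at hmono ⊢
  nlinarith

theorem inter_neg_orthant_subset {m : ℕ} :
    tradeoffCone (Fin m) M ∩ -orthant m ⊆ {0} := by
  rintro v ⟨hv, hneg⟩
  have hnonpos : ∀ j, v j ≤ 0 := fun j => by simpa using hneg j
  have hpos : ∑ j, max (v j) 0 = 0 := by simp [hnonpos]
  funext i
  have := hv i
  rw [hpos, mul_zero] at this
  exact le_antisymm (hnonpos i) (by simpa using this)

end tradeoffCone

theorem IsEpsProperEff.image_subset_tradeoffCone {n m : ℕ} {X : Set (Fin n → ℝ)}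
    {f : (Fin n → ℝ) → (Fin m → ℝ)} {ε : Fin m → ℝ} {xbar : Fin n → ℝ}
    (h : IsEpsProperEff X f ε xbar) :
    ∃ M, 0 ≤ M ∧ (fun x => f x - (f xbar - ε)) '' X ⊆ tradeoffCone (Fin m) M := by
  obtain ⟨-, M, hM, hbound⟩ := h
  refine ⟨M, hM.le, ?_⟩
  rintro _ ⟨x, hx, rfl⟩ i
  have hsum_nonneg : 0 ≤ ∑ j, max ((f x - (f xbar - ε)) j) 0 :=
    Finset.sum_nonneg fun j _ => le_max_right _ _
  simp only [Pi.sub_apply] at *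
  by_cases hi : f x i < f xbar i - ε i
  · obtain ⟨j, hj, hratio⟩ := hbound i x hx hi
    rw [div_le_iff₀ (by linarith)] at hratio
    have hj_le : f x j - (f xbar j - ε j) ≤ ∑ k, max (f x k - (f xbar k - ε k)) 0 :=
      (le_max_left _ _).trans <|
        Finset.single_le_sum (f := fun k => max (f x k - (f xbar k - ε k)) 0)
          (fun k _ => le_max_right _ _) (Finset.mem_univ j)
    nlinarith
  · nlinarith

theorem stmt_3_general {n m : ℕ} (X : Set (Fin n → ℝ))
    (f : (Fin n → ℝ) → (Fin m → ℝ))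
    (ε : Fin m → ℝ)
    (xbar : Fin n → ℝ)
    (h : IsEpsProperEff X f ε xbar) :
    closure (coneGen (((fun x => f x - (f xbar - ε)) '' X) + orthant m)) ∩ (-(orthant m))
      = {0} := by
  obtain ⟨M, hM, himage⟩ := h.image_subset_tradeoffCone
  have hcone : coneGen (((fun x => f x - (f xbar - ε)) '' X) + orthant m)
      ⊆ tradeoffCone (Fin m) M :=
    coneGen_subset_of_smul_mem
      ((add_subset_add_right himage).trans (tradeoffCone.add_orthant_subset hM))
      fun _ ht _ => tradeoffCone.smul_mem ht
  refine subset_antisymm ?_ (singleton_subset_iff.2 ⟨subset_closure (zero_mem_coneGen ?_), ?_⟩)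
  · exact (inter_subset_inter_left _ (closure_minimal hcone tradeoffCone.isClosed)).trans
      tradeoffCone.inter_neg_orthant_subset
  · exact ⟨_, ⟨_, ⟨xbar, h.1.1, rfl⟩, 0, fun _ => le_rfl, add_zero _⟩⟩
  · simp [orthant]

/-- Necessary condition for ε-proper efficiency: if `xbar ∈ X` is an ε-properly efficient
solution, then `cl cone [f(X) + ℝ^m_+ - (f(xbar) - ε)] ∩ (-ℝ^m_+) = {0}`. -/
theorem stmt_3 {n m : ℕ} (X : Set (Fin n → ℝ)) (hX : X.Nonempty)
    (f : (Fin n → ℝ) → (Fin m → ℝ))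
    (ε : Fin m → ℝ) (hε : ∀ i, 0 ≤ ε i)
    (xbar : Fin n → ℝ) (hxbar : xbar ∈ X)
    (h : IsEpsProperEff X f ε xbar) :
    closure (coneGen (((fun x => f x - (f xbar - ε)) '' X) + orthant m)) ∩ (-(orthant m))
      = {0} :=
  stmt_3_general X f ε xbar h
end

section
/- (Sufficient condition for ε-proper efficiency.) Let X ⊆ ℝ^n be nonempty, f : ℝ^n → ℝ^m with components f_1,…,f_m, K = ℝ^m_+, and ε ∈ ℝ^m_+. If x̄ ∈ X satisfies cl cone[f(X) + ℝ^m_+ − (f(x̄) − ε)] ∩ (−ℝ^m_+) = {0}, then x̄ is an ε-properly efficient solution. -/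
open Set Pointwise

/-! Translate the image by `f xbar - ε`, so that `D = f(X) - (f xbar - ε)`. A point of `D` in
`-ℝ^m_+` already lies in the cone, hence is `0`: this is ε-efficiency. If no trade-off bound `M`
exists, then, there being finitely many objectives, a single index `i` admits points `v ∈ D` with
`v i < 0` whose positive coordinates are arbitrarily small compared with `-v i`. Scaled by
`(-v i)⁻¹`, with the remaining negative coordinates raised to `0` by adding an element of
`ℝ^m_+`, they approach `-eᵢ`, a nonzero point of the closed cone lying in `-ℝ^m_+`. -/

lemma subset_coneGen {E : Type*} [AddCommGroup E] [Module ℝ E] (D : Set E) :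
    D ⊆ coneGen D :=
  fun d hd => ⟨1, zero_le_one, d, hd, (one_smul ℝ d).symm⟩

lemma zero_mem_orthant (m : ℕ) : (0 : Fin m → ℝ) ∈ orthant m :=
  fun _ => le_rfl

lemma mem_closure_coneGen_add_orthant {m : ℕ} {D : Set (Fin m → ℝ)} {v : Fin m → ℝ}
    (hv : v ∈ D) : v ∈ closure (coneGen (D + orthant m)) :=
  subset_closure <| subset_coneGen _ ⟨v, hv, 0, zero_mem_orthant m, add_zero v⟩

lemma eq_zero_of_neg_mem_orthant {m : ℕ} {D : Set (Fin m → ℝ)}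
    (h : closure (coneGen (D + orthant m)) ∩ -orthant m = {0}) {v : Fin m → ℝ}
    (hv : v ∈ D) (hneg : -v ∈ orthant m) : v = 0 :=
  h.subset ⟨mem_closure_coneGen_add_orthant hv, hneg⟩

lemma neg_single_mem_closure_coneGen {m : ℕ} {D : Set (Fin m → ℝ)} {i : Fin m}
    (hD : ∀ M > 0, ∃ v ∈ D, v i < 0 ∧ ∀ j, 0 < v j → M * v j < -v i) :
    -Pi.single i 1 ∈ closure (coneGen (D + orthant m)) := by
  refine Metric.mem_closure_iff.2 fun δ hδ => ?_
  obtain ⟨v, hvD, hvi, hv⟩ := hD δ⁻¹ (inv_pos.2 hδ)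
  set u : Fin m → ℝ := Function.update (fun j => max (v j) 0) i (v i) with hu_def
  have hu : u ∈ D + orthant m := by
    refine ⟨v, hvD, u - v, fun j => ?_, add_sub_cancel v u⟩
    rcases eq_or_ne j i with rfl | hj
    · simp [u]
    · simp [u, hj]
  refine ⟨(-v i)⁻¹ • u, ⟨_, inv_nonneg.2 (neg_nonneg.2 hvi.le), u, hu, rfl⟩, ?_⟩
  rw [dist_pi_lt_iff hδ]
  intro j
  rcases eq_or_ne j i with rfl | hj
  · simpa [u, hvi.ne] using hδ
  · simp only [Pi.neg_apply, Pi.single_eq_of_ne hj, neg_zero, Pi.smul_apply, smul_eq_mul, hu_def,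
      Function.update_of_ne hj, Real.dist_eq, zero_sub, abs_neg]
    rw [abs_of_nonneg (mul_nonneg (inv_nonneg.2 (neg_nonneg.2 hvi.le)) (le_max_right _ _)),
      inv_mul_lt_iff₀ (neg_pos.2 hvi)]
    rcases le_or_gt (v j) 0 with hvj | hvj
    · rw [max_eq_right hvj]
      exact mul_pos (neg_pos.2 hvi) hδ
    · rw [max_eq_left hvj.le, mul_comm, ← inv_mul_lt_iff₀ hδ]
      exact hv j hvj

lemma exists_forall_pos_of_forall_pos_exists {ι : Type*} [Fintype ι] {P : ι → ℝ → Prop}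
    (hP : ∀ i, Antitone (P i)) (h : ∀ M > 0, ∃ i, P i M) : ∃ i, ∀ M > 0, P i M := by
  by_contra! hbad
  choose g hg_pos hg using hbad
  have hsum : 0 ≤ ∑ i, g i := Finset.sum_nonneg fun j _ => (hg_pos j).le
  obtain ⟨i, hi⟩ := h (1 + ∑ i, g i) (by linarith)
  have hgi : g i ≤ 1 + ∑ i, g i := by
    have := Finset.single_le_sum (fun j _ => (hg_pos j).le) (Finset.mem_univ i)
    linarith
  exact hg i (hP i hgi hi)

lemma exists_tradeoff_bound {m : ℕ} {D : Set (Fin m → ℝ)}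
    (h : closure (coneGen (D + orthant m)) ∩ -orthant m = {0}) :
    ∃ M > 0, ∀ i, ∀ v ∈ D, v i < 0 → ∃ j, 0 < v j ∧ -v i ≤ M * v j := by
  by_contra! hM
  have hanti (i : Fin m) :
      Antitone fun M => ∃ v ∈ D, v i < 0 ∧ ∀ j, 0 < v j → M * v j < -v i :=
    fun M M' hMM' ⟨v, hvD, hvi, hv⟩ =>
      ⟨v, hvD, hvi, fun j hvj => (mul_le_mul_of_nonneg_right hMM' hvj.le).trans_lt (hv j hvj)⟩
  obtain ⟨i, hi⟩ := exists_forall_pos_of_forall_pos_exists hanti hM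
  have hmem : -Pi.single i 1 ∈ closure (coneGen (D + orthant m)) ∩ -orthant m := by
    refine ⟨neg_single_mem_closure_coneGen hi, ?_⟩
    rw [Set.mem_neg, neg_neg]
    show (0 : Fin m → ℝ) ≤ Pi.single i 1
    simp
  simpa using congrFun (h.subset hmem) i

theorem stmt_4_general {n m : ℕ} (X : Set (Fin n → ℝ))
    (f : (Fin n → ℝ) → (Fin m → ℝ))
    (ε : Fin m → ℝ)
    (xbar : Fin n → ℝ) (hxbar : xbar ∈ X)
    (h : closure (coneGen (((fun x => f x - (f xbar - ε)) '' X) + orthant m)) ∩ (-(orthant m))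
      = {0}) :
    IsEpsProperEff X f ε xbar := by
  refine ⟨⟨hxbar, fun ⟨y, hy, hle, hne⟩ => hne ?_⟩, ?_⟩
  · refine sub_eq_zero.1 (eq_zero_of_neg_mem_orthant h ⟨y, hy, rfl⟩ ?_)
    rwa [neg_sub]
  obtain ⟨M, hM, hbound⟩ := exists_tradeoff_bound h
  refine ⟨M, hM, fun i x hx hxi => ?_⟩
  obtain ⟨j, hj, hij⟩ := hbound i _ ⟨x, hx, rfl⟩ (by simpa using hxi)
  simp only [Pi.sub_apply] at hj hij
  exact ⟨j, by linarith, (div_le_iff₀ (by linarith)).2 (by linarith)⟩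

/-- Sufficient condition for ε-proper efficiency: if `xbar ∈ X` satisfies
`cl cone [f(X) + ℝ^m_+ - (f(xbar) - ε)] ∩ (-ℝ^m_+) = {0}`, then `xbar` is an ε-properly
efficient solution. -/
theorem stmt_4 {n m : ℕ} (X : Set (Fin n → ℝ)) (hX : X.Nonempty)
    (f : (Fin n → ℝ) → (Fin m → ℝ))
    (ε : Fin m → ℝ) (hε : ∀ i, 0 ≤ ε i)
    (xbar : Fin n → ℝ) (hxbar : xbar ∈ X)
    (h : closure (coneGen (((fun x => f x - (f xbar - ε)) '' X) + orthant m)) ∩ (-(orthant m))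
      = {0}) :
    IsEpsProperEff X f ε xbar :=
  stmt_4_general X f ε xbar hxbar h
end

section
/- Let X ⊆ ℝ^n be a nonempty polyhedral convex set, f : ℝ^n → ℝ^m an affine map, K ⊆ ℝ^m a pointed polyhedral convex cone (K ∩ (−K) = {0}), and e ∈ K \ {0}. If there exists at least one e-properly efficient solution, then the set of e-properly efficient solutions coincides with the set of e-efficient solutions; that is, either the e-properly efficient solution set is empty or it equals the e-efficient solution set. -/
/-!
Fourier–Motzkin elimination shows that linear images of polyhedra are polyhedra, so
`A = f(X) + K` is a polyhedron. Homogenizing `A - c` gives a polyhedral, hence closed, cone in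
`ℝ × ℝ^m` whose projection is `cone (A - c)` together with the recession directions of `A`;
so the closure of `cone (A - c)` adds nothing but recession directions. For `c = f x - e` with `x`
`e`-efficient, `cone (A - c)` meets `-K` only at `0` because `K` is pointed. A recession direction
of `A` lies in the closure of `cone (A - c')` for every `c'`, so the existence of one `e`-properly
efficient solution keeps these directions out of `-K` as well.
-/

open Set Pointwise

theorem Finite.exists_between_of_forall_le {α ι κ : Type*} [LinearOrder α] [Nonempty α]
    [Finite ι] [Finite κ] {l : ι → α} {u : κ → α} (h : ∀ i j, l i ≤ u j) :
    ∃ s, (∀ i, l i ≤ s) ∧ ∀ j, s ≤ u j := by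
  rcases isEmpty_or_nonempty ι with hι | hι
  · rcases isEmpty_or_nonempty κ with hκ | hκ
    · exact ⟨Classical.arbitrary α, isEmptyElim, isEmptyElim⟩
    · obtain ⟨j₀, hj₀⟩ := Finite.exists_min u
      exact ⟨u j₀, isEmptyElim, hj₀⟩
  · obtain ⟨i₀, hi₀⟩ := Finite.exists_max l
    exact ⟨l i₀, hi₀, h i₀⟩

/-- Fourier–Motzkin elimination of the variable `s`. -/
theorem exists_forall_add_mul_le_iff {𝕜 ι : Type*} [Field 𝕜] [LinearOrder 𝕜]
    [IsStrictOrderedRing 𝕜] [Finite ι] (p α b : ι → 𝕜) :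
    (∃ s, ∀ i, p i + s * α i ≤ b i) ↔
      (∀ i, α i = 0 → p i ≤ b i) ∧
        ∀ i, 0 < α i → ∀ j, α j < 0 → α i * p j - α j * p i ≤ α i * b j - α j * b i := by
  constructor
  · rintro ⟨s, hs⟩
    refine ⟨fun i hi => by simpa [hi] using hs i, fun i hi j hj => ?_⟩
    linarith [mul_le_mul_of_nonneg_left (hs i) (neg_nonneg.2 hj.le),
      mul_le_mul_of_nonneg_left (hs j) hi.le]
  · rintro ⟨hzero, hpair⟩
    obtain ⟨s, hlower, hupper⟩ := Finite.exists_between_of_forall_le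
      (l := fun j : {j // α j < 0} => (b j - p j) / α j)
      (u := fun i : {i // 0 < α i} => (b i - p i) / α i) fun ⟨j, hj⟩ ⟨i, hi⟩ => by
        dsimp only
        rw [div_le_iff_of_neg hj, div_mul_eq_mul_div, div_le_iff₀ hi]
        linarith [hpair i hi j hj]
    refine ⟨s, fun i => ?_⟩
    rcases lt_trichotomy (α i) 0 with hi | hi | hi
    · linarith [(div_le_iff_of_neg hi).1 (hlower ⟨i, hi⟩)]
    · simpa [hi] using hzero i hi
    · linarith [(le_div_iff₀ hi).1 (hupper ⟨i, hi⟩)]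

section Polyhedral

variable {𝕜 E F : Type*} [Field 𝕜] [LinearOrder 𝕜] [AddCommGroup E] [Module 𝕜 E]
  [AddCommGroup F] [Module 𝕜 F]

variable (𝕜) in
def IsPolyhedral (S : Set E) : Prop :=
  ∃ (ι : Type) (_ : Finite ι) (φ : ι → Module.Dual 𝕜 E) (b : ι → 𝕜),
    S = {x | ∀ i, φ i x ≤ b i}

theorem isPolyhedral_setOf_forall_le {ι : Type} [Finite ι] (φ : ι → Module.Dual 𝕜 E)
    (b : ι → 𝕜) :
    IsPolyhedral 𝕜 {x | ∀ i, φ i x ≤ b i} :=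
  ⟨ι, inferInstance, φ, b, rfl⟩

namespace IsPolyhedral

variable {S : Set E}

theorem inter {T : Set E} (hS : IsPolyhedral 𝕜 S) (hT : IsPolyhedral 𝕜 T) :
    IsPolyhedral 𝕜 (S ∩ T) := by
  obtain ⟨ι, _, φ, b, rfl⟩ := hS
  obtain ⟨κ, _, ψ, c, rfl⟩ := hT
  convert isPolyhedral_setOf_forall_le (Sum.elim φ ψ) (Sum.elim b c) using 1
  ext x
  simp [Sum.forall]

theorem preimage (hS : IsPolyhedral 𝕜 S) (L : F →ₗ[𝕜] E) : IsPolyhedral 𝕜 (L ⁻¹' S) := by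
  obtain ⟨ι, _, φ, b, rfl⟩ := hS
  exact isPolyhedral_setOf_forall_le (fun i => φ i ∘ₗ L) b

theorem prod {T : Set F} (hS : IsPolyhedral 𝕜 S) (hT : IsPolyhedral 𝕜 T) :
    IsPolyhedral 𝕜 (S ×ˢ T) :=
  (hS.preimage (LinearMap.fst 𝕜 E F)).inter (hT.preimage (LinearMap.snd 𝕜 E F))

end IsPolyhedral

theorem isPolyhedral_setOf_sum_mul_le {ι κ : Type} [Finite ι] [Fintype κ] (a : ι → κ → 𝕜)
    (b : ι → 𝕜) : IsPolyhedral 𝕜 {x : κ → 𝕜 | ∀ i, ∑ j, a i j * x j ≤ b i} := by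
  convert isPolyhedral_setOf_forall_le (E := κ → 𝕜) (fun i => ∑ j, a i j • LinearMap.proj j) b
    using 1
  ext x
  simp

variable [IsStrictOrderedRing 𝕜]

namespace IsPolyhedral

variable {S : Set E}

theorem preimage_add_const (hS : IsPolyhedral 𝕜 S) (c : E) :
    IsPolyhedral 𝕜 ((· + c) ⁻¹' S) := by
  obtain ⟨ι, _, φ, b, rfl⟩ := hS
  convert isPolyhedral_setOf_forall_le φ (fun i => b i - φ i c) using 1
  ext x
  simp [le_sub_iff_add_le]

theorem add_span_singleton (hS : IsPolyhedral 𝕜 S) (v : E) :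
    IsPolyhedral 𝕜 (S + ((𝕜 ∙ v : Submodule 𝕜 E) : Set E)) := by
  obtain ⟨ι, _, φ, b, rfl⟩ := hS
  have hmem : ∀ y, y ∈ {x | ∀ i, φ i x ≤ b i} + ((𝕜 ∙ v : Submodule 𝕜 E) : Set E) ↔
      ∃ s : 𝕜, ∀ i, φ i y + s * φ i v ≤ b i := by
    intro y
    simp only [Set.mem_add, SetLike.mem_coe, Submodule.mem_span_singleton, mem_ofPred_eq]
    constructor
    · rintro ⟨x, hx, _, ⟨s, rfl⟩, rfl⟩
      refine ⟨-s, fun i => ?_⟩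
      simpa using hx i
    · rintro ⟨s, hs⟩
      exact ⟨y + s • v, fun i => by simpa using hs i, (-s) • v, ⟨-s, rfl⟩, by simp⟩
  convert (isPolyhedral_setOf_forall_le (fun i : {i // φ i v = 0} => φ i) (fun i => b i)).inter
    (isPolyhedral_setOf_forall_le
      (fun ij : {i // 0 < φ i v} × {j // φ j v < 0} =>
        φ ij.1 v • φ ij.2 - φ ij.2 v • φ ij.1)
      (fun ij => φ ij.1 v * b ij.2 - φ ij.2 v * b ij.1)) using 1
  ext y
  simp only [hmem, exists_forall_add_mul_le_iff, mem_inter_iff, mem_ofPred_eq, Subtype.forall,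
    Prod.forall, LinearMap.sub_apply, LinearMap.smul_apply, smul_eq_mul]

theorem add_submodule (hS : IsPolyhedral 𝕜 S) {V : Submodule 𝕜 E} (hV : V.FG) :
    IsPolyhedral 𝕜 (S + (V : Set E)) := by
  induction V, hV using Submodule.fg_induction generalizing S with
  | singleton v => exact hS.add_span_singleton v
  | sup V₁ V₂ _ _ h₁ h₂ =>
    rw [Submodule.coe_sup, ← add_assoc]
    exact h₂ (h₁ hS)

end IsPolyhedral

theorem LinearMap.isPolyhedral_ker [FiniteDimensional 𝕜 F] (T : E →ₗ[𝕜] F) :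
    IsPolyhedral 𝕜 (LinearMap.ker T : Set E) := by
  let b := Module.finBasis 𝕜 F
  convert isPolyhedral_setOf_forall_le
    (Sum.elim (fun i => b.coord i ∘ₗ T) (fun i => -(b.coord i ∘ₗ T))) (fun _ => 0) using 1
  ext x
  simp only [SetLike.mem_coe, LinearMap.mem_ker, mem_ofPred_eq, Sum.forall, Sum.elim_inl,
    Sum.elim_inr, LinearMap.comp_apply, LinearMap.neg_apply, neg_nonpos,
    ← b.forall_coord_eq_zero_iff, ← forall_and, le_antisymm_iff]

namespace IsPolyhedral

variable [FiniteDimensional 𝕜 E] [FiniteDimensional 𝕜 F] {S T : Set E}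

theorem image (hS : IsPolyhedral 𝕜 S) (L : E →ₗ[𝕜] F) : IsPolyhedral 𝕜 (L '' S) := by
  -- `L '' S = {y | (0, y) ∈ graph L|S + E × {0}}`
  have hgraph : IsPolyhedral 𝕜 (Prod.fst ⁻¹' S ∩ {z : E × F | z.2 = L z.1}) := by
    refine (hS.preimage (LinearMap.fst 𝕜 E F)).inter ?_
    convert LinearMap.isPolyhedral_ker (LinearMap.snd 𝕜 E F - L ∘ₗ LinearMap.fst 𝕜 E F) using 1
    ext z
    simp [sub_eq_zero]
  convert (hgraph.add_submodule (Module.Finite.fg_top.map (LinearMap.inl 𝕜 E F))).preimage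
    (LinearMap.inr 𝕜 E F) using 1
  ext y
  simp only [mem_image, mem_preimage, LinearMap.inr_apply, Set.mem_add, mem_inter_iff,
    mem_ofPred_eq, SetLike.mem_coe, Submodule.mem_map, Submodule.mem_top, true_and,
    LinearMap.inl_apply, Prod.exists, exists_exists_eq_and]
  constructor
  · rintro ⟨x, hx, rfl⟩
    exact ⟨x, L x, ⟨hx, rfl⟩, -x, by simp⟩
  · rintro ⟨x, _, ⟨hx, rfl⟩, e, he⟩
    exact ⟨x, hx, by simpa using congrArg Prod.snd he⟩

theorem image_affine (hS : IsPolyhedral 𝕜 S) (f : E →ᵃ[𝕜] F) : IsPolyhedral 𝕜 (f '' S) := by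
  have hf : ⇑f = (· + f 0) ∘ f.linear := funext fun x => congrFun f.decomp x
  rw [hf, image_comp, image_add_right]
  exact (hS.image f.linear).preimage_add_const _

theorem add (hS : IsPolyhedral 𝕜 S) (hT : IsPolyhedral 𝕜 T) : IsPolyhedral 𝕜 (S + T) := by
  rw [← image2_add, ← image_prod]
  exact (hS.prod hT).image (LinearMap.fst 𝕜 E E + LinearMap.snd 𝕜 E E)

end IsPolyhedral

theorem PointedCone.coe_hull_range {ι : Type*} [Fintype ι] (v : ι → E) :
    (PointedCone.hull 𝕜 (range v) : Set E) =
      {x | ∃ t : ι → 𝕜, (∀ j, 0 ≤ t j) ∧ x = ∑ j, t j • v j} := by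
  ext x
  simp only [SetLike.mem_coe, Submodule.mem_span_range_iff_exists_fun, mem_ofPred_eq]
  constructor
  · rintro ⟨c, rfl⟩
    exact ⟨fun j => c j, fun j => (c j).2, by simp [Nonneg.coe_smul]⟩
  · rintro ⟨t, ht, rfl⟩
    exact ⟨fun j => ⟨t j, ht j⟩, by simp [Nonneg.mk_smul]⟩

theorem PointedCone.isPolyhedral_hull_range [FiniteDimensional 𝕜 E] {ι : Type} [Fintype ι]
    (v : ι → E) :
    IsPolyhedral 𝕜 (PointedCone.hull 𝕜 (range v) : Set E) := by
  have horthant : IsPolyhedral 𝕜 {t : ι → 𝕜 | ∀ j, 0 ≤ t j} := by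
    refine ⟨ι, inferInstance, fun j => -LinearMap.proj j, fun _ => 0, ?_⟩
    ext t
    simp
  convert horthant.image (Fintype.linearCombination 𝕜 v) using 1
  rw [PointedCone.coe_hull_range]
  ext x
  simp [Fintype.linearCombination_apply, eq_comm]

end Polyhedral

section Cone

open Filter Topology

variable {E : Type*} [AddCommGroup E] [Module ℝ E] [TopologicalSpace E] [IsTopologicalAddGroup E]
  [ContinuousSMul ℝ E]

theorem mem_closure_coneGen_preimage_add_of_ray {A : Set E} {a w : E}
    (h : ∀ s : ℝ, 0 ≤ s → a + s • w ∈ A) (c : E) :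
    w ∈ closure (coneGen ((· + c) ⁻¹' A)) := by
  have hlim : Tendsto (fun s : ℝ => s⁻¹ • (a - c) + w) atTop (𝓝 w) := by
    simpa using ((tendsto_inv_atTop_zero (𝕜 := ℝ)).smul_const (a - c)).add_const w
  refine mem_closure_of_tendsto hlim ((eventually_gt_atTop 0).mono fun s hs => ?_)
  refine ⟨s⁻¹, inv_nonneg.2 hs.le, a + s • w - c, by simpa using h s hs.le, ?_⟩
  simp only [smul_sub, smul_add, smul_smul, inv_mul_cancel₀ hs.ne', one_smul]
  abel

variable [T2Space E] [FiniteDimensional ℝ E]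

theorem IsPolyhedral.isClosed {S : Set E} (hS : IsPolyhedral ℝ S) : IsClosed S := by
  obtain ⟨ι, _, φ, b, rfl⟩ := hS
  rw [ofPred_forall]
  exact isClosed_iInter fun i =>
    isClosed_le (φ i).continuous_of_finiteDimensional continuous_const

theorem IsPolyhedral.closure_coneGen_subset {A : Set E} (hA : IsPolyhedral ℝ A) :
    closure (coneGen A) ⊆ coneGen A ∪ {w | ∀ a ∈ A, ∀ s : ℝ, 0 ≤ s → a + s • w ∈ A} := by
  obtain ⟨ι, _, φ, b, rfl⟩ := hA
  -- the homogenization of `A`; its slice at `t > 0` is `t • A`, at `t = 0` the recession cone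
  have hH : IsPolyhedral ℝ {z : ℝ × E | 0 ≤ z.1 ∧ ∀ i, φ i z.2 ≤ z.1 * b i} := by
    convert isPolyhedral_setOf_forall_le (fun i : Option ι => i.elim (-LinearMap.fst ℝ ℝ E)
      fun i => φ i ∘ₗ LinearMap.snd ℝ ℝ E - b i • LinearMap.fst ℝ ℝ E) 0 using 1
    ext z
    simp [Option.forall, mul_comm]
  refine (closure_minimal ?_ (hH.image (LinearMap.snd ℝ ℝ E)).isClosed).trans ?_
  · rintro _ ⟨t, ht, d, hd, rfl⟩
    refine ⟨(t, t • d), ⟨ht, fun i => ?_⟩, rfl⟩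
    simpa [mul_comm t] using mul_le_mul_of_nonneg_right (hd i) ht
  · rintro _ ⟨⟨t, w⟩, ⟨ht, hw⟩, rfl⟩
    rcases ht.eq_or_lt with rfl | ht
    · refine Or.inr fun a ha s hs i => ?_
      have hwi : φ i w ≤ 0 := by simpa using hw i
      simpa using add_le_of_le_of_nonpos (ha i) (mul_nonpos_of_nonneg_of_nonpos hs hwi)
    · refine Or.inl ⟨t, ht.le, t⁻¹ • w, fun i => ?_, ?_⟩
      · rw [map_smul, smul_eq_mul, inv_mul_le_iff₀ ht]
        exact hw i
      · rw [smul_smul, mul_inv_cancel₀ ht.ne', one_smul]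
        rfl

end Cone

theorem image_sub_const_add_eq_preimage {α E : Type*} [AddCommGroup E] (g : α → E) (X : Set α)
    (K : Set E) (c : E) :
    (fun y => g y - c) '' X + K = (· + c) ⁻¹' (g '' X + K) := by
  ext d
  simp only [Set.mem_add, mem_image, mem_preimage, exists_exists_and_eq_and]
  constructor
  · rintro ⟨y, hy, k, hk, rfl⟩
    exact ⟨y, hy, k, hk, by abel⟩
  · rintro ⟨y, hy, k, hk, h⟩
    exact ⟨y, hy, k, hk, by rw [sub_add_eq_add_sub, h, add_sub_cancel_right]⟩

section Efficiency

variable {E : Type*} [AddCommGroup E] [Module ℝ E] (K : PointedCone ℝ E) {S : Set E} {c : E}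

/-- For `S = f '' X` and `c = f x - e`, this is `e`-efficiency of `x`. -/
def IsNondominated (S : Set E) (c : E) : Prop :=
  ∀ s ∈ S, c - s ∈ K → s = c

/-- Benson's proper version of `IsNondominated`. -/
def IsProperlyNondominated [TopologicalSpace E] (S : Set E) (c : E) : Prop :=
  closure (coneGen ((· + c) ⁻¹' (S + (K : Set E)))) ∩ -(K : Set E) = {0}

variable {K}

theorem IsProperlyNondominated.isNondominated [TopologicalSpace E]
    (h : IsProperlyNondominated K S c) : IsNondominated K S c := by
  intro s hs hcs
  have hmem : s - c ∈ closure (coneGen ((· + c) ⁻¹' (S + (K : Set E)))) ∩ -(K : Set E) :=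
    ⟨subset_closure ⟨1, zero_le_one, s - c, ⟨s, hs, 0, K.zero_mem, by simp⟩, (one_smul ℝ _).symm⟩,
      by simpa using hcs⟩
  rw [h] at hmem
  exact sub_eq_zero.1 hmem

theorem IsNondominated.coneGen_inter_neg_subset (hK : (K : Set E) ∩ -K = {0})
    (h : IsNondominated K S c) :
    coneGen ((· + c) ⁻¹' (S + (K : Set E))) ∩ -(K : Set E) ⊆ {0} := by
  rintro _ ⟨⟨t, ht, d, ⟨s, hs, k, hk, hsk⟩, rfl⟩, htd⟩
  dsimp only at hsk
  rcases ht.eq_or_lt with rfl | ht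
  · simp
  have hd : -d ∈ K := by
    simpa [smul_smul, inv_mul_cancel₀ ht.ne'] using
      K.smul_mem (inv_nonneg.2 ht.le) (Set.mem_neg.1 htd)
  have hsc : s = c := h s hs (by
    convert K.add_mem hk hd using 1
    linear_combination (norm := module) -hsk)
  have hdk : d = k := by linear_combination (norm := module) hsc - hsk
  have hd0 : d ∈ (K : Set E) ∩ -K := ⟨hdk ▸ hk, hd⟩
  rw [hK] at hd0
  simp [Set.mem_singleton_iff.1 hd0]

theorem IsNondominated.isProperlyNondominated [TopologicalSpace E] [IsTopologicalAddGroup E]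
    [ContinuousSMul ℝ E] [T2Space E] [FiniteDimensional ℝ E]
    (hA : IsPolyhedral ℝ (S + (K : Set E))) (hK : (K : Set E) ∩ -K = {0}) (hS : S.Nonempty)
    {c₀ : E} (h₀ : IsProperlyNondominated K S c₀) (h : IsNondominated K S c) :
    IsProperlyNondominated K S c := by
  obtain ⟨s₀, hs₀⟩ := hS
  have hd₀ : s₀ - c ∈ (· + c) ⁻¹' (S + (K : Set E)) := ⟨s₀, hs₀, 0, K.zero_mem, by simp⟩
  refine Subset.antisymm (fun z ⟨hz, hzK⟩ => ?_) ?_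
  · rcases (hA.preimage_add_const c).closure_coneGen_subset hz with hz | hz
    · exact h.coneGen_inter_neg_subset hK ⟨hz, hzK⟩
    · have hray : z ∈ closure (coneGen ((· + c₀) ⁻¹' (S + (K : Set E)))) :=
        mem_closure_coneGen_preimage_add_of_ray (a := s₀)
          (fun s hs => by simpa [add_right_comm] using hz _ hd₀ s hs) c₀
      exact h₀ ▸ ⟨hray, hzK⟩
  · rintro _ rfl
    exact ⟨subset_closure ⟨0, le_rfl, _, hd₀, (zero_smul ℝ _).symm⟩, by simp⟩

end Efficiency

theorem stmt_9_general {n m : ℕ} (X : Set (Fin n → ℝ))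
    (hXpoly : ∃ (p : ℕ) (a : Fin p → Fin n → ℝ) (b : Fin p → ℝ),
      X = {x | ∀ i, ∑ j, a i j * x j ≤ b i})
    (f : (Fin n → ℝ) →ᵃ[ℝ] (Fin m → ℝ))
    (K : Set (Fin m → ℝ))
    (hKpoly : ∃ (q : ℕ) (v : Fin q → Fin m → ℝ),
      K = {x | ∃ t : Fin q → ℝ, (∀ j, 0 ≤ t j) ∧ x = ∑ j, t j • v j})
    (hKpointed : K ∩ (-K) = {0})
    (e : Fin m → ℝ)
    (hex : ∃ xbar ∈ X,
      closure (coneGen (((fun x => f x - (f xbar - e)) '' X) + K)) ∩ (-K) = {0}) :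
    {x | x ∈ X ∧
        closure (coneGen (((fun y => f y - (f x - e)) '' X) + K)) ∩ (-K) = {0}} =
      {x | x ∈ X ∧ ¬ ∃ y ∈ X, f x - e - f y ∈ K ∧ f y ≠ f x - e} := by
  obtain ⟨xbar, hxbar, hproper⟩ := hex
  have hX : IsPolyhedral ℝ X := by
    obtain ⟨p, a, b, rfl⟩ := hXpoly
    exact isPolyhedral_setOf_sum_mul_le a b
  obtain ⟨q, v, rfl⟩ := hKpoly
  rw [← PointedCone.coe_hull_range] at hKpointed hproper ⊢
  have hA : IsPolyhedral ℝ (f '' X + (PointedCone.hull ℝ (range v) : Set (Fin m → ℝ))) :=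
    (hX.image_affine f).add (PointedCone.isPolyhedral_hull_range v)
  simp only [image_sub_const_add_eq_preimage] at hproper ⊢
  have hiff : ∀ c, IsProperlyNondominated _ (f '' X) c ↔ IsNondominated _ (f '' X) c :=
    fun c => ⟨IsProperlyNondominated.isNondominated, fun h =>
      h.isProperlyNondominated hA hKpointed ⟨_, mem_image_of_mem f hxbar⟩ hproper⟩
  ext x
  simp only [mem_ofPred_eq]
  exact and_congr_right fun _ => (hiff (f x - e)).trans (by simp [IsNondominated])

/-- In a linear vector optimization problem (polyhedral convex `X`, affine `f`, pointed
polyhedral convex cone `K`) with `e ∈ K \ {0}`: if there exists at least one `e`-properly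
efficient solution, then the `e`-properly efficient solution set coincides with the
`e`-efficient solution set. -/
theorem stmt_9 {n m : ℕ} (X : Set (Fin n → ℝ)) (hXne : X.Nonempty)
    (hXpoly : ∃ (p : ℕ) (a : Fin p → Fin n → ℝ) (b : Fin p → ℝ),
      X = {x | ∀ i, ∑ j, a i j * x j ≤ b i})
    (f : (Fin n → ℝ) →ᵃ[ℝ] (Fin m → ℝ))
    (K : Set (Fin m → ℝ))
    (hKpoly : ∃ (q : ℕ) (v : Fin q → Fin m → ℝ),
      K = {x | ∃ t : Fin q → ℝ, (∀ j, 0 ≤ t j) ∧ x = ∑ j, t j • v j})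
    (hKpointed : K ∩ (-K) = {0})
    (e : Fin m → ℝ) (heK : e ∈ K) (he0 : e ≠ 0)
    (hex : ∃ xbar ∈ X,
      closure (coneGen (((fun x => f x - (f xbar - e)) '' X) + K)) ∩ (-K) = {0}) :
    {x | x ∈ X ∧
        closure (coneGen (((fun y => f y - (f x - e)) '' X) + K)) ∩ (-K) = {0}} =
      {x | x ∈ X ∧ ¬ ∃ y ∈ X, f x - e - f y ∈ K ∧ f y ≠ f x - e} :=
  stmt_9_general X hXpoly f K hKpoly hKpointed e hex
end

section
/- Let n = m = 2, X = K = ℝ²_+, f(x₁, x₂) = (−x₁, x₂), and let ε = (ε₁, ε₂) ∈ ℝ²_+ with ε₂ > 0. Then no point of X is an ε-properly efficient solution; equivalently, for every x̄ ∈ X, cl cone[f(X) − (f(x̄) − ε)] ∩ (−ℝ²_+) ≠ {0}. Moreover the ε-efficient solution set is nonempty. -/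
open Set Pointwise

/-!
Moving `x̄` along the first axis gives `f(x̄ + t e₀) - (f(x̄) - ε) = ε - t e₀`, a ray in the
translated image with direction `-e₀`. Hence `-e₀ ∈ cl cone[f(X) - (f(x̄) - ε)] ∩ (-ℝ²₊)`, and
that is incompatible with ε-proper efficiency: a nonzero `w ∈ -ℝᵐ₊` with `wᵢ < 0` in the closed
cone is approximated by `t d` with `d` in the translated image, `t dᵢ < wᵢ / 2` and all
`M t dⱼ < -wᵢ / 2`, contradicting the trade-off bound `-dᵢ ≤ M dⱼ`. Efficiency of `0` is
immediate since `ε₁ > 0` and `f₁ ≥ 0` on `ℝ²₊`.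
-/

open Filter Topology

-- `t⁻¹ • (v + t • w) = t⁻¹ • v + w → w` as `t → ∞`.
theorem mem_closure_coneGen_of_forall_add_smul_mem {E : Type*} [AddCommGroup E] [Module ℝ E]
    [TopologicalSpace E] [ContinuousAdd E] [ContinuousSMul ℝ E] {D : Set E} {v w : E}
    (h : ∀ t : ℝ, 0 < t → v + t • w ∈ D) : w ∈ closure (coneGen D) := by
  have hlim : Tendsto (fun t : ℝ => t⁻¹ • v + w) atTop (𝓝 w) := by
    have := ((tendsto_inv_atTop_zero (𝕜 := ℝ)).smul_const v).add_const w
    rwa [zero_smul, zero_add] at this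
  refine mem_closure_of_tendsto hlim ?_
  filter_upwards [eventually_gt_atTop 0] with t ht
  refine ⟨t⁻¹, inv_nonneg.mpr ht.le, v + t • w, h t ht, ?_⟩
  rw [smul_add, smul_smul, inv_mul_cancel₀ ht.ne', one_smul]

theorem IsEpsProperEff.closure_coneGen_inter_neg_orthant_subset {n m : ℕ}
    {X : Set (Fin n → ℝ)} {f : (Fin n → ℝ) → (Fin m → ℝ)} {ε : Fin m → ℝ} {xbar : Fin n → ℝ}
    (h : IsEpsProperEff X f ε xbar) :
    closure (coneGen ((fun x => f x - (f xbar - ε)) '' X)) ∩ -(orthant m) ⊆ {0} := by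
  obtain ⟨-, M, hM, hbound⟩ := h
  rintro w ⟨hw, hwneg⟩
  by_contra hw0
  obtain ⟨i, hi⟩ : ∃ i, w i < 0 := by
    by_contra! hpos
    exact hw0 (funext fun j => le_antisymm (by simpa using hwneg j) (hpos j))
  let U : Set (Fin m → ℝ) := {y | y i < w i / 2} ∩ ⋂ j, {y | M * y j < -w i / 2}
  have hU : IsOpen U :=
    (isOpen_lt (continuous_apply i) continuous_const).inter
      (isOpen_iInter_of_finite fun j =>
        isOpen_lt (continuous_const.mul (continuous_apply j)) continuous_const)
  have hwU : w ∈ U := by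
    refine ⟨by simp only [mem_ofPred_eq]; linarith, mem_iInter.mpr fun j => ?_⟩
    have : M * w j ≤ 0 := mul_nonpos_of_nonneg_of_nonpos hM.le (by simpa using hwneg j)
    simp only [mem_ofPred_eq]
    linarith
  obtain ⟨_, ⟨hyi, hyj⟩, t, ht, _, ⟨x, hx, rfl⟩, rfl⟩ :=
    mem_closure_iff.mp hw U hU hwU
  simp only [mem_ofPred_eq, mem_iInter, Pi.smul_apply, Pi.sub_apply, smul_eq_mul] at hyi hyj
  have hdi : f x i < f xbar i - ε i := by
    have := neg_of_mul_neg_right (hyi.trans (by linarith)) ht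
    linarith
  obtain ⟨j, hj, hratio⟩ := hbound i x hx hdi
  rw [div_le_iff₀ (by linarith)] at hratio
  have := mul_le_mul_of_nonneg_left hratio ht
  linarith [hyj j]

theorem neg_single_zero_mem_closure_coneGen {ε xbar : Fin 2 → ℝ} (hxbar : xbar ∈ orthant 2) :
    ![-1, 0] ∈ closure (coneGen
      ((fun x : Fin 2 → ℝ => ![-x 0, x 1] - (![-xbar 0, xbar 1] - ε)) '' orthant 2)) := by
  refine mem_closure_coneGen_of_forall_add_smul_mem (v := ε) fun t ht =>
    ⟨![xbar 0 + t, xbar 1], fun i => ?_, funext fun i => ?_⟩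
  · fin_cases i
    · simpa using add_nonneg (hxbar 0) ht.le
    · simpa using hxbar 1
  · fin_cases i
    · simp [Matrix.vecHead]; abel
    · simp [Matrix.vecHead, Matrix.vecTail]

theorem isEpsEff_zero {ε : Fin 2 → ℝ} (hε : 0 < ε 1) :
    IsEpsEff (orthant 2) (fun x : Fin 2 → ℝ => ![-x 0, x 1]) ε 0 := by
  refine ⟨fun _ => le_rfl, ?_⟩
  rintro ⟨y, hy, hle, -⟩
  have h1 : y 1 ≤ -ε 1 := by simpa [Matrix.vecHead, Matrix.vecTail] using hle 1
  linarith [hy 1]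

theorem stmt_12_general (ε : Fin 2 → ℝ) (hε2 : 0 < ε 1) :
    (∀ xbar ∈ orthant 2,
        ¬ IsEpsProperEff (orthant 2) (fun x : Fin 2 → ℝ => ![-x 0, x 1]) ε xbar) ∧
    (∀ xbar ∈ orthant 2,
        closure (coneGen
            ((fun x : Fin 2 → ℝ => ![-x 0, x 1] - (![-xbar 0, xbar 1] - ε)) '' orthant 2))
          ∩ (-(orthant 2)) ≠ {0}) ∧
    (∃ xbar : Fin 2 → ℝ,
        IsEpsEff (orthant 2) (fun x : Fin 2 → ℝ => ![-x 0, x 1]) ε xbar) := by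
  have hne : (![-1, 0] : Fin 2 → ℝ) ≠ 0 := fun h => by simpa using congrFun h 0
  have hneg : (![-1, 0] : Fin 2 → ℝ) ∈ -(orthant 2) := fun i => by fin_cases i <;> simp
  have hmem : ∀ xbar ∈ orthant 2, ![-1, 0] ∈ closure (coneGen
      ((fun x : Fin 2 → ℝ => ![-x 0, x 1] - (![-xbar 0, xbar 1] - ε)) '' orthant 2))
        ∩ -(orthant 2) :=
    fun xbar hxbar => ⟨neg_single_zero_mem_closure_coneGen hxbar, hneg⟩
  refine ⟨fun xbar hxbar hproper => hne ?_, fun xbar hxbar hcone => hne ?_, 0, isEpsEff_zero hε2⟩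
  · exact hproper.closure_coneGen_inter_neg_orthant_subset (hmem xbar hxbar)
  · exact mem_singleton_iff.mp (hcone ▸ hmem xbar hxbar)

/-- Example: `X = K = ℝ²₊`, `f(x₁,x₂) = (-x₁, x₂)`, `ε = (ε₁,ε₂) ∈ ℝ²₊` with `ε₂ > 0`.
No point of `X` is ε-properly efficient; equivalently, for every `x̄ ∈ X`,
`cl cone [f(X) - (f(x̄) - ε)] ∩ (-ℝ²₊) ≠ {0}`. Moreover the ε-efficient solution set is
nonempty. -/
theorem stmt_12 (ε : Fin 2 → ℝ) (hε1 : 0 ≤ ε 0) (hε2 : 0 < ε 1) :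
    (∀ xbar ∈ orthant 2,
        ¬ IsEpsProperEff (orthant 2) (fun x : Fin 2 → ℝ => ![-x 0, x 1]) ε xbar) ∧
    (∀ xbar ∈ orthant 2,
        closure (coneGen
            ((fun x : Fin 2 → ℝ => ![-x 0, x 1] - (![-xbar 0, xbar 1] - ε)) '' orthant 2))
          ∩ (-(orthant 2)) ≠ {0}) ∧
    (∃ xbar : Fin 2 → ℝ,
        IsEpsEff (orthant 2) (fun x : Fin 2 → ℝ => ![-x 0, x 1]) ε xbar) :=
  stmt_12_general ε hε2
end
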